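/- arXiv:1801.02910 — 4 statements merged into one kernel-verified Lean document; each statement's English description precedes it below -/
import Mathlib

section
/- If P lies on the boundary of the Newton polyhedron Δ₀(f) ⊆ ℝⁿ of a nonzero polynomial f vanishing at the origin, Q lies on the boundary of Δ₀(g) ⊆ ℝᵐ for g likewise, then every convex combination of (P,0) and (0,Q) lies on the boundary of Δ₀(f+g) ⊆ ℝ^{n+m}, where f and g are in disjoint sets of variables. -/
open MvPolynomial Pointwise

noncomputable def suppSet {ι k : Type*} [CommSemiring k] (f : MvPolynomial ι k) :
    Set (ι → ℝ) :=
  (fun d : ι →₀ ℕ => fun i => (d i : ℝ)) '' (f.support : Set (ι →₀ ℕ))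

noncomputable def newton {ι k : Type*} [CommSemiring k] (f : MvPolynomial ι k) :
    Set (ι → ℝ) :=
  convexHull ℝ (suppSet f) + {x : ι → ℝ | ∀ i, 0 ≤ x i}

noncomputable def sigmaP {ι k : Type*} [CommSemiring k] (f : MvPolynomial ι k) : ENNReal :=
  sSup {s : ENNReal | ∃ σ : ℝ, 0 < σ ∧ s = ENNReal.ofReal σ ∧ (fun _ : ι => 1 / σ) ∈ newton f}

noncomputable def NV {ι k : Type*} [Fintype ι] [CommSemiring k]
    (f : MvPolynomial ι k) (a : ι → ℝ) : ℝ :=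
  sInf ((fun x => ∑ i, a i * x i) '' newton f)

noncomputable def meetLocus {ι k : Type*} [Fintype ι] [CommSemiring k]
    (f : MvPolynomial ι k) (a : ι → ℝ) : Set (ι → ℝ) :=
  {x ∈ newton f | ∑ i, a i * x i = NV f a}

open Classical in
noncomputable def trunc {ι k : Type*} [CommSemiring k]
    (f : MvPolynomial ι k) (τ : Set (ι → ℝ)) : MvPolynomial ι k :=
  ∑ d ∈ f.support, if (fun i => (d i : ℝ)) ∈ τ then monomial d (f.coeff d) else 0

def nondegWrt {ι k : Type*} [Fintype ι] [Field k]
    (f : MvPolynomial ι k) (τ : Set (ι → ℝ)) : Prop :=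
  ¬ ∃ x : ι → AlgebraicClosure k, (∀ i, x i ≠ 0) ∧
      ∀ i, eval x (pderiv i (map (algebraMap k (AlgebraicClosure k)) (trunc f τ))) = 0

def weakNondegWrt {ι k : Type*} [Fintype ι] [Field k]
    (f : MvPolynomial ι k) (τ : Set (ι → ℝ)) : Prop :=
  ¬ ∃ x : ι → AlgebraicClosure k, (∀ i, x i ≠ 0) ∧
      eval x (map (algebraMap k (AlgebraicClosure k)) (trunc f τ)) = 0 ∧
      ∀ i, eval x (pderiv i (map (algebraMap k (AlgebraicClosure k)) (trunc f τ))) = 0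

def isNondeg {ι k : Type*} [Fintype ι] [Field k] (f : MvPolynomial ι k) : Prop :=
  ∀ a : ι → ℝ, (∀ i, 0 ≤ a i) → nondegWrt f (meetLocus f a)

/-!
A boundary point `P` of the closed convex upper set `Δ₀(f)` is a minimum point of some nonzero
linear functional `φ` (Hahn–Banach), and `φ` is monotone, so `φ(P) ≥ 0`. After rescaling `φ` and
the functional `ψ` found for `Q` by nonnegative factors, not both zero, so that `φ(P) = ψ(Q)`, the
functional `(x, y) ↦ φ x + ψ y` is bounded below by `φ(P)` on the support of `f + g`, hence on
`Δ₀(f + g)`, and attains this value at `(t P, (1 - t) Q)`; a nonzero linear functional has no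
minimum at an interior point. Since `f(0) = 0`, the supports of `f` and `g` are disjoint, so every
monomial of either survives in `f + g`, which puts `(t P, (1 - t) Q)` in `Δ₀(f + g)`.
-/

open Set

lemma exists_nonneg_mul_eq_mul {R : Type*} [CommSemiring R] [PartialOrder R] [IsOrderedRing R]
    [Nontrivial R] {α β : R} (hα : 0 ≤ α) (hβ : 0 ≤ β) :
    ∃ c d : R, 0 ≤ c ∧ 0 ≤ d ∧ (c ≠ 0 ∨ d ≠ 0) ∧ c * α = d * β := by
  rcases hα.eq_or_lt with rfl | hα
  · exact ⟨1, 0, zero_le_one, le_rfl, Or.inl one_ne_zero, by simp⟩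
  · exact ⟨β, α, hβ, hα.le, Or.inr hα.ne', mul_comm β α⟩

lemma exists_isMinOn_of_notMem_interior {E : Type*} [TopologicalSpace E] [AddCommGroup E]
    [Module ℝ E] [IsTopologicalAddGroup E] [ContinuousSMul ℝ E] {A : Set E} (hA : Convex ℝ A)
    (hint : (interior A).Nonempty) {x : E} (hx : x ∉ interior A) :
    ∃ φ : StrongDual ℝ E, φ ≠ 0 ∧ IsMinOn φ A x := by
  obtain ⟨φ, hφ, hmax⟩ := geometric_hahn_banach_of_nonempty_interior_point hA hx hint
  exact ⟨-φ, neg_ne_zero.2 hφ, isMinOn_iff.2 fun a ha => by simpa using hmax a ha⟩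

lemma notMem_interior_of_isMinOn {E : Type*} [NormedAddCommGroup E] [NormedSpace ℝ E]
    {A : Set E} {φ : StrongDual ℝ E} (hφ : φ ≠ 0) {x : E} (hx : IsMinOn φ A x) :
    x ∉ interior A := fun hint =>
  hφ ((hx.isLocalMin (mem_interior_iff_mem_nhds.1 hint)).hasFDerivAt_eq_zero φ.hasFDerivAt)

lemma IsMinOn.smul_of_nonneg {E : Type*} [TopologicalSpace E] [AddCommGroup E] [Module ℝ E]
    {A : Set E} {φ : StrongDual ℝ E} {x : E} (hx : IsMinOn φ A x) {c : ℝ} (hc : 0 ≤ c) :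
    IsMinOn (c • φ) A x :=
  isMinOn_iff.2 fun y hy => by simpa using mul_le_mul_of_nonneg_left (isMinOn_iff.1 hx y hy) hc

lemma monotone_of_isMinOn {E : Type*} [TopologicalSpace E] [AddCommGroup E] [PartialOrder E]
    [IsOrderedAddMonoid E] [Module ℝ E] {S : Set E} (hS : IsUpperSet S) {φ : StrongDual ℝ E}
    {x : E} (hxS : x ∈ S) (hx : IsMinOn φ S x) : Monotone φ := by
  intro a b hab
  have := isMinOn_iff.1 hx (x + (b - a)) (hS (le_add_of_nonneg_right (sub_nonneg.2 hab)) hxS)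
  simp only [map_add, map_sub] at this
  linarith

section NewtonPolyhedron
variable {ι κ k : Type*} [CommSemiring k]

lemma newton_eq (f : MvPolynomial ι k) : newton f = convexHull ℝ (suppSet f) + Ici 0 := rfl

lemma suppSet_subset_newton (f : MvPolynomial ι k) : suppSet f ⊆ newton f := by
  rw [newton_eq]
  exact fun x hx => mem_add.2 ⟨x, subset_convexHull ℝ _ hx, 0, mem_Ici.2 le_rfl, add_zero x⟩

lemma convex_newton (f : MvPolynomial ι k) : Convex ℝ (newton f) :=
  (convex_convexHull ℝ _).add (convex_Ici 0)

lemma isClosed_newton (f : MvPolynomial ι k) : IsClosed (newton f) :=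
  isClosed_Ici.add_left_of_isCompact ((f.support.finite_toSet.image _).isCompact_convexHull ℝ)

lemma isUpperSet_newton (f : MvPolynomial ι k) : IsUpperSet (newton f) := by
  rw [newton_eq]
  intro x y hxy hx
  obtain ⟨u, hu, c, hc, rfl⟩ := mem_add.1 hx
  exact mem_add.2 ⟨u, hu, c + (y - (u + c)), add_nonneg hc (sub_nonneg.2 hxy), by
    rw [← add_assoc, add_sub_cancel]⟩

lemma newton_subset_Ici (f : MvPolynomial ι k) : newton f ⊆ Ici 0 := by
  have hsupp : convexHull ℝ (suppSet f) ⊆ Ici 0 :=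
    convexHull_min (by rintro _ ⟨d, -, rfl⟩ i; positivity) (convex_Ici 0)
  rw [newton_eq]
  intro x hx
  obtain ⟨u, hu, c, hc, rfl⟩ := mem_add.1 hx
  exact add_nonneg (mem_Ici.1 (hsupp hu)) (mem_Ici.1 hc)

lemma interior_newton_nonempty [Fintype ι] {f : MvPolynomial ι k} (hf : (newton f).Nonempty) :
    (interior (newton f)).Nonempty := by
  obtain ⟨x, hx⟩ := hf
  exact ⟨x + 1, (isUpperSet_newton f).mem_interior_of_forall_lt (subset_closure hx)
    fun i => by simp⟩

lemma mapsTo_newton {f : MvPolynomial ι k} {g : MvPolynomial κ k}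
    {L : (ι → ℝ) →ₗ[ℝ] (κ → ℝ)} (hL : Monotone L) (h : MapsTo L (suppSet f) (suppSet g)) :
    MapsTo L (newton f) (newton g) := by
  rw [newton_eq, newton_eq]
  intro x hx
  obtain ⟨u, hu, c, hc, rfl⟩ := mem_add.1 hx
  refine mem_add.2 ⟨L u, ?_, L c, map_zero L ▸ hL hc, (map_add L u c).symm⟩
  exact convexHull_mono h.image_subset (L.image_convexHull _ ▸ mem_image_of_mem L hu)

lemma le_of_mem_newton {f : MvPolynomial ι k} {φ : StrongDual ℝ (ι → ℝ)} (hφ : Monotone φ)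
    {c : ℝ} (h : ∀ x ∈ suppSet f, c ≤ φ x) {x : ι → ℝ} (hx : x ∈ newton f) : c ≤ φ x := by
  obtain ⟨u, hu, w, hw, rfl⟩ := mem_add.1 (newton_eq f ▸ hx)
  have hu' : c ≤ φ u := convexHull_min h ((convex_Ici c).linear_preimage φ.toLinearMap) hu
  have hw' : 0 ≤ φ w := map_zero φ ▸ hφ hw
  rw [map_add]
  linarith

lemma exists_monotone_isMinOn_of_mem_frontier [Fintype ι] {f : MvPolynomial ι k} {P : ι → ℝ}
    (hP : P ∈ frontier (newton f)) :
    ∃ φ : StrongDual ℝ (ι → ℝ), φ ≠ 0 ∧ Monotone φ ∧ IsMinOn φ (newton f) P := by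
  rw [(isClosed_newton f).frontier_eq] at hP
  obtain ⟨φ, hφ0, hφP⟩ := exists_isMinOn_of_notMem_interior (convex_newton f)
    (interior_newton_nonempty ⟨P, hP.1⟩) hP.2
  exact ⟨φ, hφ0, monotone_of_isMinOn (isUpperSet_newton f) hP.1 hφP, hφP⟩

lemma zero_notMem_suppSet {f : MvPolynomial ι k} (hf : constantCoeff f = 0) :
    (0 : ι → ℝ) ∉ suppSet f := by
  rintro ⟨d, hd, hd0⟩
  have : d = 0 := Finsupp.ext fun i => by simpa using congrFun hd0 i
  subst this
  exact (mem_support_iff.1 hd) hf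

lemma suppSet_add_of_disjoint {f g : MvPolynomial ι k} (h : Disjoint (suppSet f) (suppSet g)) :
    suppSet (f + g) = suppSet f ∪ suppSet g := by
  classical
  have hsupp : Disjoint f.support g.support := Finset.disjoint_coe.1 (h.of_image)
  have hadd : (f + g).support = f.support ∪ g.support := Finsupp.support_add_eq hsupp
  rw [suppSet, suppSet, suppSet, hadd, Finset.coe_union, image_union]

lemma suppSet_add_subset (f g : MvPolynomial ι k) :
    suppSet (f + g) ⊆ suppSet f ∪ suppSet g := by
  classical
  rw [suppSet, suppSet, suppSet, ← image_union, ← Finset.coe_union]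
  exact image_mono (Finset.coe_subset.2 support_add)

end NewtonPolyhedron

section AppendCoordinates
variable {n m : ℕ}

lemma natAdd_notMem_range_castAdd (j : Fin m) : Fin.natAdd n j ∉ range (Fin.castAdd m) := by
  rintro ⟨i, hi⟩
  have := congrArg Fin.val hi
  simp only [Fin.val_castAdd, Fin.val_natAdd] at this
  omega

lemma castAdd_notMem_range_natAdd (i : Fin n) : Fin.castAdd m i ∉ range (Fin.natAdd n) := by
  rintro ⟨j, hj⟩
  have := congrArg Fin.val hj
  simp only [Fin.val_castAdd, Fin.val_natAdd] at this
  omega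

lemma append_le_append {α : Type*} [Preorder α] {x x' : Fin n → α} {y y' : Fin m → α}
    (hx : x ≤ x') (hy : y ≤ y') : Fin.append x y ≤ Fin.append x' y' := by
  intro i
  refine Fin.addCases (fun j => ?_) (fun j => ?_) i
  · simpa using hx j
  · simpa using hy j

variable (n m) in
noncomputable def appendCLE : ((Fin n → ℝ) × (Fin m → ℝ)) ≃L[ℝ] (Fin (n + m) → ℝ) :=
  LinearEquiv.toContinuousLinearEquiv
    { Fin.appendEquiv n m with
      map_add' := fun p q => by
        ext i
        refine Fin.addCases (fun j => ?_) (fun j => ?_) i <;> simp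
      map_smul' := fun c p => by
        ext i
        refine Fin.addCases (fun j => ?_) (fun j => ?_) i <;> simp }

@[simp]
lemma appendCLE_apply (p : (Fin n → ℝ) × (Fin m → ℝ)) :
    appendCLE n m p = Fin.append p.1 p.2 := rfl

@[simp]
lemma appendCLE_symm_apply (w : Fin (n + m) → ℝ) :
    (appendCLE n m).symm w = (fun i => w (Fin.castAdd m i), fun j => w (Fin.natAdd n j)) := rfl

noncomputable def appendDual (φ : StrongDual ℝ (Fin n → ℝ)) (ψ : StrongDual ℝ (Fin m → ℝ)) :
    StrongDual ℝ (Fin (n + m) → ℝ) :=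
  (φ.coprod ψ).comp (appendCLE n m).symm.toContinuousLinearMap

@[simp]
lemma appendDual_append (φ : StrongDual ℝ (Fin n → ℝ)) (ψ : StrongDual ℝ (Fin m → ℝ))
    (x : Fin n → ℝ) (y : Fin m → ℝ) : appendDual φ ψ (Fin.append x y) = φ x + ψ y := by
  simp [appendDual]

lemma monotone_appendDual {φ : StrongDual ℝ (Fin n → ℝ)} {ψ : StrongDual ℝ (Fin m → ℝ)}
    (hφ : Monotone φ) (hψ : Monotone ψ) : Monotone (appendDual φ ψ) := fun w w' h => by
  simpa [appendDual] using add_le_add (hφ fun i => h _) (hψ fun j => h _)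

lemma appendDual_ne_zero {φ : StrongDual ℝ (Fin n → ℝ)} {ψ : StrongDual ℝ (Fin m → ℝ)}
    (h : φ ≠ 0 ∨ ψ ≠ 0) : appendDual φ ψ ≠ 0 := by
  intro h0
  rcases h with hφ | hψ
  · exact hφ (ContinuousLinearMap.ext fun x => by
      simpa using DFunLike.congr_fun h0 (Fin.append x 0))
  · exact hψ (ContinuousLinearMap.ext fun y => by
      simpa using DFunLike.congr_fun h0 (Fin.append 0 y))

end AppendCoordinates

section DisjointVariables
variable {k : Type*} [CommSemiring k] {n m : ℕ}

lemma suppSet_rename_castAdd (f : MvPolynomial (Fin n) k) :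
    suppSet (rename (Fin.castAdd m) f) = (fun x => Fin.append x 0) '' suppSet f := by
  classical
  rw [suppSet, suppSet, support_rename_of_injective (Fin.castAdd_injective n m),
    Finset.coe_image, image_image, image_image]
  refine image_congr fun d _ => funext fun i => Fin.addCases (fun j => ?_) (fun j => ?_) i
  · simp [Finsupp.mapDomain_apply (Fin.castAdd_injective n m)]
  · simp [Finsupp.mapDomain_of_notMem_range _ _ (natAdd_notMem_range_castAdd j)]

lemma suppSet_rename_natAdd (g : MvPolynomial (Fin m) k) :
    suppSet (rename (Fin.natAdd n) g) = (fun y => Fin.append 0 y) '' suppSet g := by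
  classical
  rw [suppSet, suppSet, support_rename_of_injective (Fin.natAdd_injective m n),
    Finset.coe_image, image_image, image_image]
  refine image_congr fun d _ => funext fun i => Fin.addCases (fun j => ?_) (fun j => ?_) i
  · simp [Finsupp.mapDomain_of_notMem_range _ _ (castAdd_notMem_range_natAdd j)]
  · simp [Finsupp.mapDomain_apply (Fin.natAdd_injective m n)]

lemma suppSet_rename_add_rename {f : MvPolynomial (Fin n) k} (g : MvPolynomial (Fin m) k)
    (hf : constantCoeff f = 0) :
    suppSet (rename (Fin.castAdd m) f + rename (Fin.natAdd n) g) =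
      (fun x => Fin.append x 0) '' suppSet f ∪ (fun y => Fin.append 0 y) '' suppSet g := by
  rw [← suppSet_rename_castAdd, ← suppSet_rename_natAdd]
  refine suppSet_add_of_disjoint (disjoint_left.2 ?_)
  rw [suppSet_rename_castAdd, suppSet_rename_natAdd]
  rintro _ ⟨x, hx, rfl⟩ ⟨y, -, hxy⟩
  have hx0 : x = 0 := funext fun i => by simpa using (congrFun hxy (Fin.castAdd m i)).symm
  exact zero_notMem_suppSet hf (hx0 ▸ hx)

lemma append_mem_newton_rename_add_rename {f : MvPolynomial (Fin n) k}
    {g : MvPolynomial (Fin m) k} (hf : constantCoeff f = 0) {P : Fin n → ℝ} {Q : Fin m → ℝ}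
    (hP : P ∈ newton f) (hQ : Q ∈ newton g) {t : ℝ} (ht0 : 0 ≤ t) (ht1 : t ≤ 1) :
    Fin.append (t • P) ((1 - t) • Q) ∈
      newton (rename (Fin.castAdd m) f + rename (Fin.natAdd n) g) := by
  have hL := mapsTo_newton (f := f) (L := (appendCLE n m).toLinearMap ∘ₗ LinearMap.inl ℝ _ _)
    (fun x x' h => by simpa using append_le_append h le_rfl)
    (by rw [suppSet_rename_add_rename g hf]; exact fun x hx => Or.inl ⟨x, hx, by simp⟩)
  have hR := mapsTo_newton (f := g) (L := (appendCLE n m).toLinearMap ∘ₗ LinearMap.inr ℝ _ _)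
    (fun y y' h => by simpa using append_le_append le_rfl h)
    (by rw [suppSet_rename_add_rename g hf]; exact fun y hy => Or.inr ⟨y, hy, by simp⟩)
  convert convex_newton _ (hL hP) (hR hQ) ht0 (sub_nonneg.2 ht1) (by ring) using 1
  ext i
  refine Fin.addCases (fun j => ?_) (fun j => ?_) i <;> simp

lemma isMinOn_appendDual {f : MvPolynomial (Fin n) k} {g : MvPolynomial (Fin m) k}
    {φ : StrongDual ℝ (Fin n → ℝ)} {ψ : StrongDual ℝ (Fin m → ℝ)} {P : Fin n → ℝ}
    {Q : Fin m → ℝ} (hφ : Monotone φ) (hψ : Monotone ψ) (hP : IsMinOn φ (newton f) P)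
    (hQ : IsMinOn ψ (newton g) Q) (hPQ : φ P = ψ Q) (t : ℝ) :
    IsMinOn (appendDual φ ψ) (newton (rename (Fin.castAdd m) f + rename (Fin.natAdd n) g))
      (Fin.append (t • P) ((1 - t) • Q)) := by
  have hval : appendDual φ ψ (Fin.append (t • P) ((1 - t) • Q)) = φ P := by
    simp only [appendDual_append, map_smul, smul_eq_mul, ← hPQ]
    ring
  refine isMinOn_iff.2 fun w hw => hval ▸ le_of_mem_newton (monotone_appendDual hφ hψ) ?_ hw
  intro v hv
  rcases suppSet_add_subset _ _ hv with hv | hv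
  · rw [suppSet_rename_castAdd] at hv
    obtain ⟨x, hx, rfl⟩ := hv
    simpa using isMinOn_iff.1 hP x (suppSet_subset_newton f hx)
  · rw [suppSet_rename_natAdd] at hv
    obtain ⟨y, hy, rfl⟩ := hv
    simpa [hPQ] using isMinOn_iff.1 hQ y (suppSet_subset_newton g hy)

end DisjointVariables

theorem stmt0_general {k : Type*} [CommRing k] {n m : ℕ}
    (f : MvPolynomial (Fin n) k) (g : MvPolynomial (Fin m) k)
    (hf : constantCoeff f = 0)
    (P : Fin n → ℝ) (Q : Fin m → ℝ)
    (hP : P ∈ frontier (newton f)) (hQ : Q ∈ frontier (newton g))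
    (t : ℝ) (ht0 : 0 ≤ t) (ht1 : t ≤ 1) :
    Fin.append (t • P) ((1 - t) • Q) ∈
      frontier (newton (rename (Fin.castAdd m) f + rename (Fin.natAdd n) g)) := by
  have hPf : P ∈ newton f := (isClosed_newton f).frontier_subset hP
  have hQg : Q ∈ newton g := (isClosed_newton g).frontier_subset hQ
  obtain ⟨φ, hφ0, hφ, hφP⟩ := exists_monotone_isMinOn_of_mem_frontier hP
  obtain ⟨ψ, hψ0, hψ, hψQ⟩ := exists_monotone_isMinOn_of_mem_frontier hQ
  obtain ⟨c, d, hc, hd, hcd, hbal⟩ := exists_nonneg_mul_eq_mul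
    (by simpa using hφ (newton_subset_Ici f hPf)) (by simpa using hψ (newton_subset_Ici g hQg))
  have hmin := isMinOn_appendDual (hφ.const_smul hc) (hψ.const_smul hd)
    (hφP.smul_of_nonneg hc) (hψQ.smul_of_nonneg hd) (by simpa using hbal) t
  have hne := appendDual_ne_zero (hcd.imp (smul_ne_zero · hφ0) (smul_ne_zero · hψ0))
  rw [(isClosed_newton _).frontier_eq]
  exact ⟨append_mem_newton_rename_add_rename hf hPf hQg ht0 ht1,
    notMem_interior_of_isMinOn hne hmin⟩

theorem stmt0 {k : Type*} [CommRing k] {n m : ℕ}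
    (f : MvPolynomial (Fin n) k) (g : MvPolynomial (Fin m) k)
    (hf0 : f ≠ 0) (hg0 : g ≠ 0)
    (hf : constantCoeff f = 0) (hg : constantCoeff g = 0)
    (P : Fin n → ℝ) (Q : Fin m → ℝ)
    (hP : P ∈ frontier (newton f)) (hQ : Q ∈ frontier (newton g))
    (t : ℝ) (ht0 : 0 ≤ t) (ht1 : t ≤ 1) :
    Fin.append (t • P) ((1 - t) • Q) ∈
      frontier (newton (rename (Fin.castAdd m) f + rename (Fin.natAdd n) g)) :=
  stmt0_general f g hf P Q hP hQ t ht0 ht1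
end

section
/- Let f ∈ k[x₁,…,xₙ] and g ∈ k[y₁,…,y_m] be polynomials vanishing at the origin. Then σ(fg) = min{σ(f), σ(g)}, where fg is viewed as a polynomial in k[x,y]. -/
open MvPolynomial Pointwise

/-!
In the disjoint variables the Newton polyhedron of `f(x) g(y)` is the product
`Δ₀(f) × Δ₀(g)`: over a domain the support of the product is the product of the supports (the
monomials `x^a y^b` are pairwise distinct, and their coefficients `f_a g_b` do not vanish), and
convex hulls and Minkowski sums with the nonnegative orthant commute with products. So the
diagonal point `(1/σ, …, 1/σ)` lies in `Δ₀(fg)` iff it lies in both `Δ₀(f)` and `Δ₀(g)`.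
Newton polyhedra are closed upwards, so the sets of admissible `σ` are closed downwards in
`(0, ∞)`; one of the two sets therefore contains the other, and the supremum over their
intersection is the smaller supremum.
-/

section MonomialSupport

variable {σ R α : Type*} [CommSemiring R]

theorem MvPolynomial.support_sum_monomial_of_injOn [DecidableEq σ] {s : Finset α}
    {e : α → σ →₀ ℕ} {c : α → R} (he : Set.InjOn e s) (hc : ∀ x ∈ s, c x ≠ 0) :
    (∑ x ∈ s, monomial (e x) (c x)).support = s.image e := by
  ext d
  simp only [mem_support_iff, coeff_sum, coeff_monomial, Finset.mem_image]
  constructor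
  · intro h
    by_contra! hd
    exact h (Finset.sum_eq_zero fun x hx => if_neg (hd x hx))
  · rintro ⟨x, hx, rfl⟩
    rw [Finset.sum_eq_single x (fun y hy hyx => if_neg fun h => hyx (he hy hx h))
      (fun h => absurd hx h), if_pos rfl]
    exact hc x hx

end MonomialSupport

def Fin.appendLinearEquiv (R M : Type*) [Semiring R] [AddCommMonoid M] [Module R M] (n m : ℕ) :
    ((Fin n → M) × (Fin m → M)) ≃ₗ[R] (Fin (n + m) → M) :=
  (Fin.appendEquiv n m).toLinearEquiv
    { map_add := fun p q => by funext i; induction i using Fin.addCases <;> simp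
      map_smul := fun c p => by funext i; induction i using Fin.addCases <;> simp }

@[simp]
theorem Fin.appendLinearEquiv_apply (R M : Type*) [Semiring R] [AddCommMonoid M] [Module R M]
    (n m : ℕ) (p : (Fin n → M) × (Fin m → M)) :
    Fin.appendLinearEquiv R M n m p = Fin.append p.1 p.2 := rfl

@[simp]
theorem Fin.appendLinearEquiv_symm_apply (R M : Type*) [Semiring R] [AddCommMonoid M]
    [Module R M] (n m : ℕ) (x : Fin (n + m) → M) :
    (Fin.appendLinearEquiv R M n m).symm x =
      (fun i => x (Fin.castAdd m i), fun j => x (Fin.natAdd n j)) := rfl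

theorem Fin.appendLinearEquiv_image_nonneg (R M : Type*) [Semiring R] [AddCommMonoid M]
    [Module R M] [Preorder M] (n m : ℕ) :
    Fin.appendLinearEquiv R M n m '' ({x | ∀ i, 0 ≤ x i} ×ˢ {x | ∀ i, 0 ≤ x i}) =
      {x | ∀ i, 0 ≤ x i} := by
  ext x
  simp [LinearEquiv.image_eq_preimage_symm, Fin.forall_fin_add]

section FinAppend

variable {n m : ℕ}

theorem Finsupp.coe_mapDomain_castAdd_add_mapDomain_natAdd {M : Type*} [AddCommMonoid M]
    (a : Fin n →₀ M) (b : Fin m →₀ M) :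
    ⇑(a.mapDomain (Fin.castAdd m) + b.mapDomain (Fin.natAdd n)) = Fin.append ⇑a ⇑b := by
  have hcast : ∀ i j, Fin.castAdd m i ≠ Fin.natAdd n j := fun i j h => by
    have := congrArg Fin.val h
    simp only [Fin.val_castAdd, Fin.val_natAdd] at this
    omega
  funext i
  induction i using Fin.addCases with
  | left j => simp [mapDomain_apply (Fin.castAdd_injective n m),
      mapDomain_of_notMem_range _ _ fun ⟨i, hi⟩ => hcast j i hi.symm]
  | right j => simp [mapDomain_apply (Fin.natAdd_injective m n),
      mapDomain_of_notMem_range _ _ fun ⟨i, hi⟩ => hcast i j hi]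

theorem Finsupp.mapDomain_castAdd_add_mapDomain_natAdd_injective {M : Type*} [AddCommMonoid M] :
    Function.Injective fun x : (Fin n →₀ M) × (Fin m →₀ M) =>
      x.1.mapDomain (Fin.castAdd m) + x.2.mapDomain (Fin.natAdd n) := by
  intro x y hxy
  have := congrArg DFunLike.coe hxy
  simp only [coe_mapDomain_castAdd_add_mapDomain_natAdd] at this
  obtain ⟨h₁, h₂⟩ := Prod.ext_iff.mp
    ((Fin.appendEquiv n m).injective this : (⇑x.1, ⇑x.2) = (⇑y.1, ⇑y.2))
  exact Prod.ext (DFunLike.coe_injective h₁) (DFunLike.coe_injective h₂)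

end FinAppend

section Sigma

variable {ι κ k k' : Type*} [CommSemiring k] [CommSemiring k']

theorem mem_newton_of_le {f : MvPolynomial ι k} {p q : ι → ℝ} (hp : p ∈ newton f) (hpq : p ≤ q) :
    q ∈ newton f := by
  obtain ⟨a, ha, b, hb, rfl⟩ := hp
  refine ⟨a, ha, q - a, fun i => ?_, add_sub_cancel a q⟩
  have := hpq i
  simp only [Pi.add_apply, Pi.sub_apply] at this ⊢
  linarith [hb i]

def admissibleSigmas (f : MvPolynomial ι k) : Set ℝ :=
  {σ | 0 < σ ∧ (fun _ => 1 / σ) ∈ newton f}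

theorem sigmaP_eq_sSup_ofReal_image (f : MvPolynomial ι k) :
    sigmaP f = sSup (ENNReal.ofReal '' admissibleSigmas f) := by
  refine congrArg sSup (Set.ext fun s => ?_)
  exact ⟨fun ⟨σ, hσ, hs, hmem⟩ => ⟨σ, ⟨hσ, hmem⟩, hs.symm⟩,
    fun ⟨σ, ⟨hσ, hmem⟩, hs⟩ => ⟨σ, hσ, hs.symm, hmem⟩⟩

theorem mem_admissibleSigmas_of_le {f : MvPolynomial ι k} {σ τ : ℝ} (hσ : σ ∈ admissibleSigmas f)
    (hτ : 0 < τ) (hτσ : τ ≤ σ) : τ ∈ admissibleSigmas f :=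
  ⟨hτ, mem_newton_of_le hσ.2 fun _ => one_div_le_one_div_of_le hτ hτσ⟩

theorem admissibleSigmas_subset_or_subset (f : MvPolynomial ι k) (g : MvPolynomial κ k') :
    admissibleSigmas f ⊆ admissibleSigmas g ∨ admissibleSigmas g ⊆ admissibleSigmas f := by
  by_contra! h
  obtain ⟨⟨σ, hσf, hσg⟩, ⟨τ, hτg, hτf⟩⟩ := And.imp Set.not_subset.mp Set.not_subset.mp h
  rcases le_total σ τ with hστ | hτσ
  · exact hσg (mem_admissibleSigmas_of_le hτg hσf.1 hστ)
  · exact hτf (mem_admissibleSigmas_of_le hσf hτg.1 hτσ)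

end Sigma

section Product

variable {n m : ℕ} {k : Type*} [CommSemiring k]

theorem rename_castAdd_mul_rename_natAdd (f : MvPolynomial (Fin n) k)
    (g : MvPolynomial (Fin m) k) :
    rename (Fin.castAdd m) f * rename (Fin.natAdd n) g =
      ∑ x ∈ f.support ×ˢ g.support,
        monomial (x.1.mapDomain (Fin.castAdd m) + x.2.mapDomain (Fin.natAdd n))
          (f.coeff x.1 * g.coeff x.2) := by
  conv_lhs => rw [← f.support_sum_monomial_coeff, ← g.support_sum_monomial_coeff]
  simp only [map_sum, rename_monomial, Finset.sum_mul_sum, monomial_mul, Finset.sum_product]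

theorem support_rename_castAdd_mul_rename_natAdd [NoZeroDivisors k] (f : MvPolynomial (Fin n) k)
    (g : MvPolynomial (Fin m) k) :
    (rename (Fin.castAdd m) f * rename (Fin.natAdd n) g).support =
      (f.support ×ˢ g.support).image
        fun x => x.1.mapDomain (Fin.castAdd m) + x.2.mapDomain (Fin.natAdd n) := by
  rw [rename_castAdd_mul_rename_natAdd, support_sum_monomial_of_injOn]
  · exact Finsupp.mapDomain_castAdd_add_mapDomain_natAdd_injective.injOn
  · intro x hx
    rw [Finset.mem_product, mem_support_iff, mem_support_iff] at hx
    exact mul_ne_zero hx.1 hx.2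

theorem suppSet_rename_castAdd_mul_rename_natAdd [NoZeroDivisors k] (f : MvPolynomial (Fin n) k)
    (g : MvPolynomial (Fin m) k) :
    suppSet (rename (Fin.castAdd m) f * rename (Fin.natAdd n) g) =
      Fin.appendLinearEquiv ℝ ℝ n m '' (suppSet f ×ˢ suppSet g) := by
  rw [suppSet, support_rename_castAdd_mul_rename_natAdd, Finset.coe_image, ← Set.image_comp,
    suppSet, suppSet, Set.prod_image_image_eq, ← Set.image_comp, Finset.coe_product]
  refine Set.image_congr fun x _ => funext fun i => ?_
  simp only [Function.comp_apply, Finsupp.coe_mapDomain_castAdd_add_mapDomain_natAdd]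
  induction i using Fin.addCases <;> simp

theorem newton_rename_castAdd_mul_rename_natAdd [NoZeroDivisors k] (f : MvPolynomial (Fin n) k)
    (g : MvPolynomial (Fin m) k) :
    newton (rename (Fin.castAdd m) f * rename (Fin.natAdd n) g) =
      Fin.appendLinearEquiv ℝ ℝ n m '' (newton f ×ˢ newton g) := by
  rw [newton, newton, newton, suppSet_rename_castAdd_mul_rename_natAdd,
    ← Fin.appendLinearEquiv_image_nonneg ℝ ℝ, ← LinearEquiv.coe_coe, ← LinearMap.image_convexHull,
    ← Set.image_add, convexHull_prod, Set.prod_add_prod_comm]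

theorem const_mem_newton_rename_castAdd_mul_rename_natAdd_iff [NoZeroDivisors k]
    (f : MvPolynomial (Fin n) k) (g : MvPolynomial (Fin m) k) (c : ℝ) :
    (fun _ => c) ∈ newton (rename (Fin.castAdd m) f * rename (Fin.natAdd n) g) ↔
      (fun _ => c) ∈ newton f ∧ (fun _ => c) ∈ newton g := by
  rw [newton_rename_castAdd_mul_rename_natAdd, LinearEquiv.image_eq_preimage_symm]
  rfl

theorem admissibleSigmas_rename_castAdd_mul_rename_natAdd [NoZeroDivisors k]
    (f : MvPolynomial (Fin n) k) (g : MvPolynomial (Fin m) k) :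
    admissibleSigmas (rename (Fin.castAdd m) f * rename (Fin.natAdd n) g) =
      admissibleSigmas f ∩ admissibleSigmas g := by
  ext σ
  simp only [admissibleSigmas, Set.mem_ofPred_eq, Set.mem_inter_iff,
    const_mem_newton_rename_castAdd_mul_rename_natAdd_iff]
  tauto

end Product

theorem stmt3_general {k : Type*} [CommRing k] [IsDomain k] {n m : ℕ}
    (f : MvPolynomial (Fin n) k) (g : MvPolynomial (Fin m) k) :
    sigmaP (rename (Fin.castAdd m) f * rename (Fin.natAdd n) g) =
      min (sigmaP f) (sigmaP g) := by
  rw [sigmaP_eq_sSup_ofReal_image, sigmaP_eq_sSup_ofReal_image, sigmaP_eq_sSup_ofReal_image,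
    admissibleSigmas_rename_castAdd_mul_rename_natAdd]
  rcases admissibleSigmas_subset_or_subset f g with h | h
  · rw [Set.inter_eq_left.mpr h, min_eq_left (sSup_le_sSup (Set.image_mono h))]
  · rw [Set.inter_eq_right.mpr h, min_eq_right (sSup_le_sSup (Set.image_mono h))]

theorem stmt3 {k : Type*} [CommRing k] [IsDomain k] {n m : ℕ}
    (f : MvPolynomial (Fin n) k) (g : MvPolynomial (Fin m) k)
    (hf : constantCoeff f = 0) (hg : constantCoeff g = 0) :
    sigmaP (rename (Fin.castAdd m) f * rename (Fin.natAdd n) g) =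
      min (sigmaP f) (sigmaP g) :=
  stmt3_general f g
end

section
/- Let f ∈ k[x₁,…,xₙ] with n ≥ 2 be a polynomial vanishing at the origin. Then σ(f) ≥ σ(f'), where f' = f(x₁,…,x_{n−1},x_{n−1}) ∈ k[x₁,…,x_{n−1}] is obtained by identifying the last two variables. -/
open MvPolynomial Pointwise

/-!
Renaming variables along `r : ι → κ` sends an exponent `d` to `L d`, where `L` is the linear map of
fibre sums `(L x) j = ∑_{r i = j} x i`. So a point `v` of the Newton polyhedron of `rename r f` is
`L q + s` with `q` in the convex hull of the support of `f` and `s ≥ 0`. As `q ≥ 0`, each fibre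
sum dominates its summands, hence `v ∘ r ≥ q` lies in the Newton polyhedron of `f`. Applied to
diagonal points, this gives `σ(rename r f) ≤ σ(f)`; identifying the last two variables is such a
renaming.
-/

theorem convexHull_suppSet_subset_nonneg {ι k : Type*} [CommSemiring k] (f : MvPolynomial ι k) :
    convexHull ℝ (suppSet f) ⊆ {x : ι → ℝ | ∀ i, 0 ≤ x i} :=
  convexHull_min (by rintro _ ⟨d, -, rfl⟩ i; positivity) (convex_Ici 0)

section FiberSum

variable {ι κ : Type*} [Fintype ι] [DecidableEq κ]

def fiberSum (r : ι → κ) : (ι → ℝ) →ₗ[ℝ] (κ → ℝ) where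
  toFun x j := ∑ i with r i = j, x i
  map_add' x y := by ext j; exact Finset.sum_add_distrib
  map_smul' c x := by ext j; simp [Finset.mul_sum]

theorem fiberSum_natCast (r : ι → κ) (d : ι →₀ ℕ) :
    fiberSum r (fun i => (d i : ℝ)) = fun j => (d.mapDomain r j : ℝ) := by
  ext j
  rw [Finsupp.mapDomain, Finsupp.sum_apply, Finsupp.sum, Nat.cast_sum]
  simp only [Finsupp.single_apply, fiberSum, LinearMap.coe_mk, AddHom.coe_mk, Nat.cast_ite,
    Nat.cast_zero, ← Finset.sum_filter]
  exact (Finset.sum_subset (Finset.filter_subset_filter _ (Finset.subset_univ _))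
    (fun i _ hi => by simp_all)).symm

theorem le_fiberSum_apply (r : ι → κ) {x : ι → ℝ} (hx : ∀ i, 0 ≤ x i) (i : ι) :
    x i ≤ fiberSum r x (r i) :=
  Finset.single_le_sum (fun j _ => hx j) (by simp)

theorem suppSet_rename_subset {k : Type*} [CommSemiring k] (r : ι → κ)
    (f : MvPolynomial ι k) : suppSet (rename r f) ⊆ fiberSum r '' suppSet f := by
  rintro _ ⟨e, he, rfl⟩
  obtain ⟨d, rfl, hd⟩ := coeff_rename_ne_zero r f e (mem_support_iff.mp he)
  exact ⟨_, ⟨d, mem_support_iff.mpr hd, rfl⟩, fiberSum_natCast r d⟩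

end FiberSum

theorem comp_mem_newton_of_mem_newton_rename {ι κ k : Type*} [Fintype ι] [CommSemiring k]
    (r : ι → κ) (f : MvPolynomial ι k) {v : κ → ℝ} (hv : v ∈ newton (rename r f)) :
    v ∘ r ∈ newton f := by
  classical
  obtain ⟨p, hp, s, hs, rfl⟩ := Set.mem_add.mp hv
  obtain ⟨q, hq, rfl⟩ : p ∈ fiberSum r '' convexHull ℝ (suppSet f) := by
    rw [LinearMap.image_convexHull]
    exact convexHull_mono (suppSet_rename_subset r f) hp
  have hq_nonneg := convexHull_suppSet_subset_nonneg f hq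
  refine Set.mem_add.mpr ⟨q, hq, (fiberSum r q + s) ∘ r - q, fun i => ?_, add_sub_cancel q _⟩
  have hq_le := le_fiberSum_apply r hq_nonneg i
  have hs_nonneg := hs (r i)
  simp only [Pi.sub_apply, Function.comp_apply, Pi.add_apply]
  linarith

theorem sigmaP_rename_le {ι κ k : Type*} [Fintype ι] [CommSemiring k] (r : ι → κ)
    (f : MvPolynomial ι k) : sigmaP (rename r f) ≤ sigmaP f := by
  refine sSup_le_sSup ?_
  rintro _ ⟨σ, hσ, rfl, hmem⟩
  exact ⟨σ, hσ, rfl, comp_mem_newton_of_mem_newton_rename r f hmem⟩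

theorem stmt4 {k : Type*} [CommRing k] {n : ℕ}
    (f : MvPolynomial (Fin (n + 2)) k) :
    sigmaP (rename (fun i : Fin (n + 2) => (⟨min i.1 n, by omega⟩ : Fin (n + 1))) f)
      ≤ sigmaP f :=
  sigmaP_rename_le _ f
end

section
/- Let x₁,…,xₗ, z_{1},…,z_d be variables and g₁,…,gₗ ∈ k[z₁,…,z_d] nonzero. Suppose F = x₁g₁ + … + xₗgₗ is non-degenerate with respect to the faces of its Newton polyhedron at the origin (no critical point of any truncation on the torus). If (a₁,…,a_d) ∈ (k̄*)^d is a common zero of g₁,…,gₗ, then the ℓ×d Jacobian matrix (∂g_i/∂z_j(a)) has rank ℓ. -/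
/-! Suppose `∑ αᵢ ∇gᵢ(a) = 0` with `α ≠ 0`, and weight the variable `xᵢ` by `1` if `αᵢ ≠ 0` and
by `2` otherwise, and every `zⱼ` by `0`. Each monomial `xᵢ z^m` of `F` then has weight `1` or `2`,
so the face of the Newton polyhedron on which the weight is minimal has truncation
`∑_{αᵢ ≠ 0} xᵢ gᵢ`. At the torus point `xᵢ = αᵢ` (`xᵢ = 1` when `αᵢ = 0`), `z = a`, the
`xᵢ`-derivatives of this truncation are `gᵢ(a) = 0` and its `zⱼ`-derivative is
`∑ αᵢ ∂ⱼgᵢ(a) = 0`, contradicting non-degeneracy. -/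

open MvPolynomial Pointwise

section Newton

variable {ι k : Type*} [CommSemiring k] {f : MvPolynomial ι k}

open Classical in
lemma coeff_trunc (f : MvPolynomial ι k) (τ : Set (ι → ℝ)) (D : ι →₀ ℕ) :
    coeff D (trunc f τ) = if (fun i => (D i : ℝ)) ∈ τ then coeff D f else 0 := by
  rw [trunc, coeff_sum, Finset.sum_eq_single D
    (fun D' _ hne => by simp [apply_ite (coeff D), coeff_monomial, hne])
    (fun hD => by simp [notMem_support_iff.mp hD])]
  simp [apply_ite (coeff D)]

lemma exponent_mem_newton {D : ι →₀ ℕ} (hD : D ∈ f.support) :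
    (fun i => (D i : ℝ)) ∈ newton f := by
  simpa [newton] using Set.add_mem_add (subset_convexHull ℝ (suppSet f) ⟨D, hD, rfl⟩)
    (show (0 : ι → ℝ) ∈ {x : ι → ℝ | ∀ i, 0 ≤ x i} from fun _ => le_rfl)

variable [Fintype ι] {w : ι → ℝ} {t : ℝ}

lemma le_weight_of_mem_newton (hw : ∀ i, 0 ≤ w i) (ht : ∀ D ∈ f.support, t ≤ ∑ i, w i * D i)
    {x : ι → ℝ} (hx : x ∈ newton f) : t ≤ ∑ i, w i * x i := by
  obtain ⟨u, hu, v, hv, rfl⟩ := hx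
  have hlin : IsLinearMap ℝ fun x : ι → ℝ => ∑ i, w i * x i :=
    ⟨fun x y => by simp [mul_add, Finset.sum_add_distrib],
      fun c x => by simp [Finset.mul_sum, mul_left_comm]⟩
  have hu : t ≤ ∑ i, w i * u i :=
    convexHull_min (by rintro _ ⟨D, hD, rfl⟩; exact ht D hD) (convex_halfSpace_ge hlin t) hu
  calc t ≤ ∑ i, w i * u i := hu
    _ ≤ ∑ i, w i * (u + v) i :=
      Finset.sum_le_sum fun i _ => by simpa [mul_add] using mul_nonneg (hw i) (hv i)

lemma NV_eq_of_isLeast (hw : ∀ i, 0 ≤ w i) (ht : ∀ D ∈ f.support, t ≤ ∑ i, w i * D i)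
    {D₀ : ι →₀ ℕ} (hD₀ : D₀ ∈ f.support) (hD₀t : ∑ i, w i * D₀ i = t) : NV f w = t :=
  IsLeast.csInf_eq ⟨⟨_, exponent_mem_newton hD₀, hD₀t⟩,
    by rintro _ ⟨x, hx, rfl⟩; exact le_weight_of_mem_newton hw ht hx⟩

open Classical in
lemma coeff_trunc_meetLocus (hw : ∀ i, 0 ≤ w i) (ht : ∀ D ∈ f.support, t ≤ ∑ i, w i * D i)
    {D₀ : ι →₀ ℕ} (hD₀ : D₀ ∈ f.support) (hD₀t : ∑ i, w i * D₀ i = t) (D : ι →₀ ℕ) :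
    coeff D (trunc f (meetLocus f w)) = if ∑ i, w i * D i = t then coeff D f else 0 := by
  rw [coeff_trunc]
  by_cases hD : D ∈ f.support
  · simp only [meetLocus, Set.mem_ofPred_eq, exponent_mem_newton hD, true_and,
      NV_eq_of_isLeast hw ht hD₀ hD₀t]
  · simp [notMem_support_iff.mp hD]

end Newton

section XLinearForm

variable {ι σ R : Type*} [CommSemiring R]

noncomputable def xExp (i : ι) (m : σ →₀ ℕ) : ι ⊕ σ →₀ ℕ :=
  Finsupp.single (Sum.inl i) 1 + m.mapDomain Sum.inr

lemma eval_sumElim_rename_inr (y : ι → R) (a : σ → R) (p : MvPolynomial σ R) :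
    eval (Sum.elim y a) (rename Sum.inr p) = eval a p := by
  rw [eval_rename, Sum.elim_comp_inr]

variable [Fintype ι]

noncomputable def xLinearForm (c : ι → MvPolynomial σ R) : MvPolynomial (ι ⊕ σ) R :=
  ∑ i, X (Sum.inl i) * rename Sum.inr (c i)

lemma coeff_xExp_xLinearForm (c : ι → MvPolynomial σ R) (i : ι) (m : σ →₀ ℕ) :
    coeff (xExp i m) (xLinearForm c) = coeff m (c i) := by
  classical
  rw [xLinearForm, coeff_sum, Finset.sum_eq_single i]
  · rw [xExp, coeff_X_mul, coeff_rename_mapDomain Sum.inr Sum.inr_injective]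
  · intro i' _ hne
    rw [coeff_X_mul', if_neg]
    simp [xExp, Finsupp.mapDomain_of_notMem_range, hne]
  · simp

lemma exists_xExp_eq_of_coeff_xLinearForm_ne_zero {c : ι → MvPolynomial σ R} {D : ι ⊕ σ →₀ ℕ}
    (h : coeff D (xLinearForm c) ≠ 0) : ∃ i m, xExp i m = D := by
  classical
  rw [xLinearForm, coeff_sum] at h
  obtain ⟨i, -, hi⟩ := Finset.exists_ne_zero_of_sum_ne_zero h
  rw [coeff_X_mul'] at hi
  split_ifs at hi with hmem
  · obtain ⟨m, hm, -⟩ := coeff_rename_ne_zero _ _ _ hi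
    refine ⟨i, m, ?_⟩
    rw [xExp, hm, add_tsub_cancel_of_le]
    exact Finsupp.single_le_iff.mpr (Nat.one_le_iff_ne_zero.mpr (Finsupp.mem_support_iff.mp hmem))
  · exact absurd rfl hi

lemma map_xLinearForm {S : Type*} [CommSemiring S] (φ : R →+* S) (c : ι → MvPolynomial σ R) :
    map φ (xLinearForm c) = xLinearForm (map φ ∘ c) := by
  simp [xLinearForm, map_rename]

lemma eval_xLinearForm (c : ι → MvPolynomial σ R) (y : ι → R) (a : σ → R) :
    eval (Sum.elim y a) (xLinearForm c) = ∑ i, y i * eval a (c i) := by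
  simp [xLinearForm, eval_sumElim_rename_inr]

lemma pderiv_inl_xLinearForm (c : ι → MvPolynomial σ R) (i : ι) :
    pderiv (Sum.inl i) (xLinearForm c) = rename Sum.inr (c i) := by
  classical
  have hrename : ∀ i' : ι, pderiv (Sum.inl i) (rename Sum.inr (c i')) = 0 := fun i' =>
    pderiv_eq_zero_of_notMem_vars fun h => by
      obtain ⟨j, -, hj⟩ := mem_vars_rename _ _ h
      cases hj
  simp [xLinearForm, pderiv_X, Pi.single_apply, hrename]

lemma pderiv_inr_xLinearForm (c : ι → MvPolynomial σ R) (j : σ) :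
    pderiv (Sum.inr j) (xLinearForm c) = xLinearForm fun i => pderiv j (c i) := by
  classical
  simp [xLinearForm, pderiv_X, pderiv_rename Sum.inr_injective]

end XLinearForm

section Face

variable {ι σ R : Type*} [CommSemiring R]

open Classical in
noncomputable def faceWeight (S : Set ι) : ι ⊕ σ → ℝ :=
  Sum.elim (fun i => if i ∈ S then 1 else 2) 0

lemma faceWeight_nonneg (S : Set ι) (s : ι ⊕ σ) : 0 ≤ faceWeight S s := by
  rcases s with i | j
  · by_cases hi : i ∈ S <;> simp [faceWeight, hi]
  · simp [faceWeight]

variable [Fintype ι] [Fintype σ]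

open Classical in
lemma faceWeight_xExp (S : Set ι) (i : ι) (m : σ →₀ ℕ) :
    ∑ s, faceWeight S s * (xExp i m s : ℝ) = if i ∈ S then 1 else 2 := by
  simp [faceWeight, xExp, Fintype.sum_sum_type, Finsupp.single_apply,
    Finsupp.mapDomain_of_notMem_range]

lemma trunc_xLinearForm_meetLocus_faceWeight (c : ι → MvPolynomial σ R)
    (S : Set ι) {i₀ : ι} (hi₀ : i₀ ∈ S) (hc : c i₀ ≠ 0) :
    trunc (xLinearForm c) (meetLocus (xLinearForm c) (faceWeight S)) =
      xLinearForm (S.indicator c) := by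
  classical
  obtain ⟨m₀, hm₀⟩ := support_nonempty.mpr hc
  have hmin : ∀ D ∈ (xLinearForm c).support, 1 ≤ ∑ s, faceWeight S s * D s := by
    intro D hD
    obtain ⟨i, m, rfl⟩ := exists_xExp_eq_of_coeff_xLinearForm_ne_zero (mem_support_iff.mp hD)
    rw [faceWeight_xExp]
    split_ifs <;> norm_num
  have hD₀ : xExp i₀ m₀ ∈ (xLinearForm c).support := by
    rwa [mem_support_iff, coeff_xExp_xLinearForm, ← mem_support_iff]
  ext D
  rw [coeff_trunc_meetLocus (faceWeight_nonneg S) hmin hD₀ (by rw [faceWeight_xExp, if_pos hi₀])]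
  by_cases hD : ∃ i m, xExp i m = D
  · obtain ⟨i, m, rfl⟩ := hD
    rw [faceWeight_xExp, coeff_xExp_xLinearForm, coeff_xExp_xLinearForm]
    by_cases hi : i ∈ S <;> simp [hi]
  · have hzero : ∀ c' : ι → MvPolynomial σ R, coeff D (xLinearForm c') = 0 := fun c' =>
      not_not.mp (mt exists_xExp_eq_of_coeff_xLinearForm_ne_zero hD)
    simp [hzero]

end Face

lemma eval_pderiv_xLinearForm_indicator_support {ι σ K : Type*} [Fintype ι] [CommSemiring K]
    [DecidableEq K] (c : ι → MvPolynomial σ K) (α : ι → K) (a : σ → K) (hc : ∀ i, eval a (c i) = 0)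
    (hα : ∀ j, ∑ i, α i * eval a (pderiv j (c i)) = 0) (s : ι ⊕ σ) :
    eval (Sum.elim (fun i => if α i = 0 then 1 else α i) a)
      (pderiv s (xLinearForm ((Function.support α).indicator c))) = 0 := by
  classical
  rcases s with i | j
  · rw [pderiv_inl_xLinearForm, eval_sumElim_rename_inr, Set.indicator_apply]
    split_ifs <;> simp [hc]
  · rw [pderiv_inr_xLinearForm, eval_xLinearForm]
    refine (Finset.sum_congr rfl fun i _ => ?_).trans (hα j)
    by_cases h : α i = 0 <;> simp [h]

theorem stmt17 {l d : ℕ} {k : Type*} [Field k]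
    (g : Fin l → MvPolynomial (Fin d) k) (hg : ∀ i, g i ≠ 0)
    (F : MvPolynomial (Fin l ⊕ Fin d) k)
    (hF : F = ∑ i : Fin l, X (Sum.inl i) * rename Sum.inr (g i))
    (hnd : isNondeg F)
    (a : Fin d → AlgebraicClosure k) (ha : ∀ j, a j ≠ 0)
    (hz : ∀ i, eval a (map (algebraMap k (AlgebraicClosure k)) (g i)) = 0) :
    (Matrix.of fun (i : Fin l) (j : Fin d) =>
        eval a (pderiv j (map (algebraMap k (AlgebraicClosure k)) (g i)))).rank = l := by
  classical
  obtain rfl : F = xLinearForm g := hF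
  refine (LinearIndependent.rank_matrix ?_).trans (Fintype.card_fin l)
  rw [Fintype.linearIndependent_iff]
  intro α hα
  by_contra! ⟨i₀, hi₀⟩
  have hkernel : ∀ j, ∑ i, α i * eval a (pderiv j (map (algebraMap k _) (g i))) = 0 := fun j => by
    simpa [Finset.sum_apply] using congrFun hα j
  refine hnd (faceWeight (Function.support α)) (faceWeight_nonneg _)
    ⟨Sum.elim (fun i => if α i = 0 then 1 else α i) a, ?_, fun s => ?_⟩
  · rintro (i | j)
    · by_cases h : α i = 0 <;> simp [h]
    · exact ha j
  · rw [trunc_xLinearForm_meetLocus_faceWeight g _ hi₀ (hg i₀), map_xLinearForm,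
      ← Set.indicator_comp_of_zero (map_zero _)]
    exact eval_pderiv_xLinearForm_indicator_support _ α a hz hkernel s
end
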